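/- arXiv:2605.14173 — 2 statements merged into one kernel-verified Lean document; each statement's English description precedes it below -/
import Mathlib

section
/- Assume the UB setup. Then ker(H_X) = {(a^{t−1}·p + h·q, p) : p, q ∈ R_n}, where products and powers are taken in R_n. -/
open Polynomial

noncomputable section

/-- `R_n = F_2[x]/(x^n - 1)`. -/
abbrev Rq (n : ℕ) : Type :=
  Polynomial (ZMod 2) ⧸ Ideal.span ({X ^ n - 1} : Set (Polynomial (ZMod 2)))

/-- The canonical projection `F_2[x] → R_n`. -/
abbrev mkq (n : ℕ) : Polynomial (ZMod 2) →+* Rq n :=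
  Ideal.Quotient.mk (Ideal.span ({X ^ n - 1} : Set (Polynomial (ZMod 2))))

/-- The unique polynomial representative of degree `< n` of an element of `R_n`
(obtained by reducing any lift modulo the monic polynomial `x^n - 1`). -/
def rep (n : ℕ) (z : Rq n) : Polynomial (ZMod 2) :=
  Function.surjInv Ideal.Quotient.mk_surjective z %ₘ (X ^ n - 1)

/-- Hamming weight of an element of `R_n`: the number of nonzero coefficients of its
unique representative of degree `< n`. -/
def wtq (n : ℕ) (z : Rq n) : ℕ := (rep n z).support.card

lemma char2 (n : ℕ) (z : Rq n) : z + z = 0 := by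
  have h2 : (1 + 1 : Polynomial (ZMod 2)) = 0 := by
    rw [← C_1, ← C_add]
    norm_num
    rfl
  have h2' : (1 + 1 : Rq n) = 0 := by
    rw [show (1 + 1 : Rq n) = mkq n (1 + 1) by simp, h2, map_zero]
  calc z + z = (1 + 1) * z := by ring
    _ = 0 := by rw [h2', zero_mul]

/-- in the UB setup (`a ∣ x^n - 1`, `h = (x^n-1)/a`, `t = 2^ℓ`, `b = a^t`),
`ker(H_X) = {(a^{t-1}·p + h·q, p) : p, q ∈ R_n}`. -/
theorem stmt6 (n : ℕ) (hn : 1 ≤ n) (a h : Polynomial (ZMod 2))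
    (hah : a * h = X ^ n - 1) (hr : 0 < a.natDegree) (ℓ t : ℕ) (hℓ : 1 ≤ ℓ)
    (ht : t = 2 ^ ℓ) :
    {w : Rq n × Rq n | mkq n a * w.1 + (mkq n a) ^ t * w.2 = 0} =
    {w : Rq n × Rq n | ∃ p q : Rq n,
      w = ((mkq n a) ^ (t - 1) * p + mkq n h * q, p)} := by
  have ha0 : a ≠ 0 := fun h0 => by simp [h0] at hr
  have ht1 : 1 ≤ t := by subst ht; exact Nat.one_le_two_pow
  have hpow : mkq n a * (mkq n a) ^ (t - 1) = (mkq n a) ^ t := by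
    rw [← pow_succ']
    congr 1
    omega
  have hAH : mkq n a * mkq n h = 0 := by
    rw [← map_mul, hah]
    exact Ideal.Quotient.eq_zero_iff_mem.mpr (Ideal.mem_span_singleton_self _)
  ext w
  simp only [Set.mem_setOf_eq]
  constructor
  · intro hw
    obtain ⟨Z, hZ⟩ := Ideal.Quotient.mk_surjective (w.1 + (mkq n a) ^ (t - 1) * w.2)
    have haZ : mkq n (a * Z) = 0 := by
      rw [map_mul]
      show mkq n a * mkq n Z = 0
      rw [hZ]
      linear_combination hw + w.2 * hpow
    have hdvd : a * h ∣ a * Z := by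
      rw [hah, ← Ideal.mem_span_singleton]
      exact Ideal.Quotient.eq_zero_iff_mem.mp haZ
    obtain ⟨Q, hQ⟩ := (mul_dvd_mul_iff_left ha0).mp hdvd
    refine ⟨w.2, mkq n Q, Prod.ext ?_ rfl⟩
    have key : mkq n h * mkq n Q = w.1 + (mkq n a) ^ (t - 1) * w.2 := by
      rw [← map_mul, ← hQ, hZ]
    simp only
    linear_combination -key - char2 n ((mkq n a) ^ (t - 1) * w.2)
  · rintro ⟨p, q, rfl⟩
    simp only
    linear_combination p * hpow + q * hAH + char2 n ((mkq n a) ^ t * p)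

end
end

section
/- Assume the UB setup with r ≥ 3. For g ∈ R_n, let supp(g) ⊆ {0,…,n−1} denote the set of indices of nonzero coefficients of g, and define ρ_6(g) := max over all 0 ≤ i_1 < i_2 < i_3 ≤ r−1 of |N_{12}|·|N_{13}|·|N_{23}|, where for {a,b,c} = {1,2,3}, N_{ab} := (supp(x^{i_a}·g) ∩ supp(x^{i_b}·g)) \ supp(x^{i_c}·g) (this equals the paper's maximum induced 6-cycle density of the Tanner graph of the first r rows of Circ(g)). Then, as real numbers, d ≤ min{3·wt(f) + 3 − 6·ρ_6(f)^{1/3}, 3·wt(h) − 6·ρ_6(h)^{1/3}}. -/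
/-!
Both bounds come from `X`-logical operators built from a trinomial `e = x^i + x^j + x^k` with
`i < j < k < r = deg a`. The pairs `(e·f, e)` and `(e·h, 0)` lie in `ker H_X` because `a·f = b`
and `a·h = 0` in `R_n`. They are not in `rs H_Z`: from `(e·f, e) = (b*·s, a*·s)` one gets
`h*·e = (ah)*·s = 0`, and from `(e·h, 0) = (b*·s, a*·s)` one gets `e·h = (a*)^(t-1)·a*·s = 0`,
while `h*·e` and `e·h` are nonzero polynomials of degree `< n`.

For the rows `x^i g, x^j g, x^k g` attaining `ρ_6(g)`, the positions covered by exactly two of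
them cancel in `e·g`, so `wt(e·g) ≤ 3 wt(g) - 2(|N₁₂| + |N₁₃| + |N₂₃|)`, and AM-GM bounds
`|N₁₂| + |N₁₃| + |N₂₃|` below by `3 ρ_6(g)^{1/3}`.
-/

open Polynomial

noncomputable section

/-- The `Z`-distance of `UB(a, ℓ)` (with `t = 2^ℓ`):
`d_Z = min { wt(u) + wt(v) : (u,v) ∈ ker H_Z \ rs H_X }`, where
`ker H_Z = {(u,v) : b*·u + a*·v = 0}` and `rs H_X = {(a·s, b·s)}`, `b = a^t`. -/
def dZv (n : ℕ) (a : Polynomial (ZMod 2)) (t : ℕ) : ℕ :=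
  sInf {m : ℕ | ∃ w : Rq n × Rq n,
    (mkq n ((a ^ t).reverse) * w.1 + mkq n a.reverse * w.2 = 0) ∧
    (¬ ∃ s : Rq n, w = (mkq n a * s, (mkq n a) ^ t * s)) ∧
    m = wtq n w.1 + wtq n w.2}

/-- The `X`-distance of `UB(a, ℓ)` (with `t = 2^ℓ`):
`d_X = min { wt(u) + wt(v) : (u,v) ∈ ker H_X \ rs H_Z }`, where
`ker H_X = {(u,v) : a·u + b·v = 0}` and `rs H_Z = {(b*·s, a*·s)}`, `b = a^t`. -/
def dXv (n : ℕ) (a : Polynomial (ZMod 2)) (t : ℕ) : ℕ :=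
  sInf {m : ℕ | ∃ w : Rq n × Rq n,
    (mkq n a * w.1 + (mkq n a) ^ t * w.2 = 0) ∧
    (¬ ∃ s : Rq n, w = (mkq n ((a ^ t).reverse) * s, mkq n a.reverse * s)) ∧
    m = wtq n w.1 + wtq n w.2}

/-- Support of an element of `R_n`: indices of nonzero coefficients of its
unique representative of degree `< n`. -/
def suppq (n : ℕ) (g : Rq n) : Finset ℕ := (rep n g).support

/-- `ρ_6(g)`: the maximum, over triples `0 ≤ i₁ < i₂ < i₃ ≤ r-1`, of
`|N₁₂|·|N₁₃|·|N₂₃|` where `N_{ab} = (supp(x^{i_a} g) ∩ supp(x^{i_b} g)) \ supp(x^{i_c} g)`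
(the maximum induced 6-cycle density of the first `r` rows of `Circ(g)`). -/
def rho6 (n r : ℕ) (g : Rq n) : ℕ :=
  (((Finset.range r ×ˢ Finset.range r) ×ˢ Finset.range r).filter
      fun p => p.1.1 < p.1.2 ∧ p.1.2 < p.2).sup fun p =>
    ((suppq n (mkq n (X ^ p.1.1) * g) ∩ suppq n (mkq n (X ^ p.1.2) * g)) \
        suppq n (mkq n (X ^ p.2) * g)).card *
    (((suppq n (mkq n (X ^ p.1.1) * g) ∩ suppq n (mkq n (X ^ p.2) * g)) \
        suppq n (mkq n (X ^ p.1.2) * g)).card *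
      ((suppq n (mkq n (X ^ p.1.2) * g) ∩ suppq n (mkq n (X ^ p.2) * g)) \
        suppq n (mkq n (X ^ p.1.1) * g)).card)

open Finset

section Representative

variable {n : ℕ}

lemma monic_X_pow_sub_one (hn : 1 ≤ n) : (X ^ n - 1 : (ZMod 2)[X]).Monic := by
  simpa using monic_X_pow_sub_C (1 : ZMod 2) (n := n) (by omega)

lemma degree_X_pow_sub_one (hn : 1 ≤ n) : (X ^ n - 1 : (ZMod 2)[X]).degree = n := by
  simpa using degree_X_pow_sub_C (R := ZMod 2) (by omega : 0 < n) 1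

lemma mkq_eq_zero_iff (p : (ZMod 2)[X]) : mkq n p = 0 ↔ X ^ n - 1 ∣ p :=
  Ideal.Quotient.eq_zero_iff_dvd _ _

lemma rep_mkq (hn : 1 ≤ n) (p : (ZMod 2)[X]) : rep n (mkq n p) = p %ₘ (X ^ n - 1) :=
  modByMonic_eq_of_dvd_sub (monic_X_pow_sub_one hn) <| by
    rw [← mkq_eq_zero_iff, map_sub, sub_eq_zero]
    exact Function.surjInv_eq _ _

lemma rep_mkq_of_degree_lt (hn : 1 ≤ n) {p : (ZMod 2)[X]} (hp : p.degree < n) :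
    rep n (mkq n p) = p := by
  rw [rep_mkq hn, modByMonic_eq_self_iff (monic_X_pow_sub_one hn), degree_X_pow_sub_one hn]
  exact hp

lemma mkq_rep (hn : 1 ≤ n) (z : Rq n) : mkq n (rep n z) = z := by
  obtain ⟨p, rfl⟩ := Ideal.Quotient.mk_surjective z
  rw [rep_mkq hn, eq_comm, ← sub_eq_zero, ← map_sub, mkq_eq_zero_iff]
  exact ⟨p /ₘ (X ^ n - 1), by rw [sub_eq_iff_eq_add', modByMonic_add_div]⟩

lemma rep_add (hn : 1 ≤ n) (z w : Rq n) : rep n (z + w) = rep n z + rep n w := by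
  obtain ⟨p, rfl⟩ := Ideal.Quotient.mk_surjective z
  obtain ⟨q, rfl⟩ := Ideal.Quotient.mk_surjective w
  simp only [← map_add, rep_mkq hn, add_modByMonic]

lemma rep_zero (hn : 1 ≤ n) : rep n 0 = 0 := by
  simpa using rep_add hn 0 0

lemma wtq_zero (hn : 1 ≤ n) : wtq n 0 = 0 := by
  simp [wtq, rep_zero hn]

end Representative

section Weight

variable {n : ℕ}

lemma card_support_sum_le {R ι : Type*} [Semiring R] (s : Finset ι) (p : ι → R[X]) :
    #(∑ i ∈ s, p i).support ≤ ∑ i ∈ s, #(p i).support :=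
  le_sum_of_subadditive (fun q : R[X] => #q.support) (by simp)
    (fun p q => (card_le_card support_add).trans (card_union_le _ _)) s p

lemma mkq_X_pow_mod (k : ℕ) : mkq n (X ^ (k % n)) = mkq n (X ^ k) := by
  have hX : mkq n X ^ n = 1 := by
    rw [← map_pow, ← sub_eq_zero, ← map_one (mkq n), ← map_sub, mkq_eq_zero_iff]
  rw [map_pow, map_pow, ← pow_eq_pow_mod k hX]

lemma wtq_mkq_sum_le {ι : Type*} (hn : 1 ≤ n) (s : Finset ι) (c : ι → ZMod 2) (k : ι → ℕ) :
    wtq n (mkq n (∑ i ∈ s, C (c i) * X ^ k i)) ≤ #s := by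
  set q := ∑ i ∈ s, C (c i) * X ^ (k i % n)
  have hq : mkq n (∑ i ∈ s, C (c i) * X ^ k i) = mkq n q := by
    simp only [q, map_sum, map_mul, mkq_X_pow_mod]
  have hdeg : q.degree < n := mem_degreeLT.1 <| Submodule.sum_mem _ fun i _ =>
    mem_degreeLT.2 <| (degree_C_mul_X_pow_le _ _).trans_lt (by exact_mod_cast Nat.mod_lt _ hn)
  rw [hq, wtq, rep_mkq_of_degree_lt hn hdeg]
  calc #q.support ≤ ∑ i ∈ s, #(C (c i) * X ^ (k i % n)).support := card_support_sum_le _ _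
    _ ≤ ∑ _i ∈ s, 1 := sum_le_sum fun i _ => card_support_C_mul_X_pow_le_one
    _ = #s := by simp

lemma wtq_mkq_le (hn : 1 ≤ n) (p : (ZMod 2)[X]) : wtq n (mkq n p) ≤ #p.support := by
  conv_lhs => rw [as_sum_support_C_mul_X_pow p]
  exact wtq_mkq_sum_le hn _ _ _

lemma wtq_X_pow_mul_le (hn : 1 ≤ n) (i : ℕ) (z : Rq n) :
    wtq n (mkq n (X ^ i) * z) ≤ wtq n z := by
  have hz : mkq n (X ^ i) * z =
      mkq n (∑ j ∈ (rep n z).support, C ((rep n z).coeff j) * X ^ (i + j)) := by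
    conv_lhs => rw [← mkq_rep hn z, as_sum_support_C_mul_X_pow (rep n z), ← map_mul, mul_sum]
    exact congrArg _ (sum_congr rfl fun j _ => by ring)
  rw [hz]
  exact wtq_mkq_sum_le hn _ _ _

lemma wtq_mkq_trinomial_le (hn : 1 ≤ n) (i j k : ℕ) :
    wtq n (mkq n (trinomial i j k 1 1 1)) ≤ 3 :=
  (wtq_mkq_le hn _).trans <|
    (card_le_card (support_trinomial_subset i j k 1 1 1)).trans card_le_three

end Weight

section Overlap

lemma support_add_eq_symmDiff (p q : (ZMod 2)[X]) :
    (p + q).support = symmDiff p.support q.support := by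
  ext j
  simp only [mem_support_iff, coeff_add, mem_symmDiff]
  generalize p.coeff j = x
  generalize q.coeff j = y
  revert x y
  decide

lemma suppq_add {n : ℕ} (hn : 1 ≤ n) (z w : Rq n) :
    suppq n (z + w) = symmDiff (suppq n z) (suppq n w) := by
  rw [suppq, rep_add hn, support_add_eq_symmDiff]
  rfl

lemma card_symmDiff_add_two_mul_card_inter {α : Type*} [DecidableEq α] (s t : Finset α) :
    #(symmDiff s t) + 2 * #(s ∩ t) = #s + #t := by
  rw [symmDiff_def, sup_eq_union, card_union_of_disjoint disjoint_sdiff_sdiff]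
  have := card_sdiff_add_card_inter s t
  have := card_sdiff_add_card_inter t s
  rw [inter_comm t s] at this
  omega

lemma card_symmDiff_symmDiff_add_le {α : Type*} [DecidableEq α] (s t u : Finset α) :
    #(symmDiff (symmDiff s t) u) + 2 * (#((s ∩ t) \ u) + #((s ∩ u) \ t) + #((t ∩ u) \ s)) ≤
      #s + #t + #u := by
  have hst := card_symmDiff_add_two_mul_card_inter s t
  have hstu := card_symmDiff_add_two_mul_card_inter (symmDiff s t) u
  have h₁ : #((s ∩ t) \ u) ≤ #(s ∩ t) := card_le_card sdiff_subset
  have h₂ : #((s ∩ u) \ t) + #((t ∩ u) \ s) ≤ #(symmDiff s t ∩ u) := by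
    rw [← card_union_of_disjoint]
    · refine card_le_card fun x hx => ?_
      simp only [mem_union, mem_sdiff, mem_inter, mem_symmDiff] at hx ⊢
      tauto
    · refine disjoint_left.2 fun x hx hx' => ?_
      simp only [mem_sdiff, mem_inter] at hx hx'
      tauto
  omega

end Overlap

section SixCycles

variable {n : ℕ}

/-- The paper's `N_{ab}` for the rows `x^i g`, `x^j g` of `Circ(g)`, relative to the third
row `x^k g`. -/
def pairOverlap (n : ℕ) (g : Rq n) (i j k : ℕ) : ℕ :=
  #((suppq n (mkq n (X ^ i) * g) ∩ suppq n (mkq n (X ^ j) * g)) \ suppq n (mkq n (X ^ k) * g))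

lemma exists_rho6_eq {r : ℕ} (hr : 3 ≤ r) (g : Rq n) :
    ∃ i j k, i < j ∧ j < k ∧ k < r ∧
      rho6 n r g = pairOverlap n g i j k * (pairOverlap n g i k j * pairOverlap n g j k i) := by
  obtain ⟨⟨⟨i, j⟩, k⟩, hmem, hsup⟩ := exists_mem_eq_sup
    (((range r ×ˢ range r) ×ˢ range r).filter fun p => p.1.1 < p.1.2 ∧ p.1.2 < p.2)
    ⟨((0, 1), 2), by simp only [mem_filter, mem_product, mem_range]; omega⟩
    fun p => pairOverlap n g p.1.1 p.1.2 p.2 * (pairOverlap n g p.1.1 p.2 p.1.2 *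
      pairOverlap n g p.1.2 p.2 p.1.1)
  simp only [mem_filter, mem_product, mem_range] at hmem
  exact ⟨i, j, k, hmem.2.1, hmem.2.2, hmem.1.2, hsup⟩

lemma wtq_trinomial_mul_add_le (hn : 1 ≤ n) (g : Rq n) (i j k : ℕ) :
    wtq n (mkq n (trinomial i j k 1 1 1) * g) +
        2 * (pairOverlap n g i j k + pairOverlap n g i k j + pairOverlap n g j k i) ≤
      3 * wtq n g := by
  have hsum : mkq n (trinomial i j k 1 1 1) * g =
      mkq n (X ^ i) * g + mkq n (X ^ j) * g + mkq n (X ^ k) * g := by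
    simp only [trinomial_def, C_1, one_mul, map_add, add_mul]
  have hcard := card_symmDiff_symmDiff_add_le (suppq n (mkq n (X ^ i) * g))
    (suppq n (mkq n (X ^ j) * g)) (suppq n (mkq n (X ^ k) * g))
  have hi := wtq_X_pow_mul_le hn i g
  have hj := wtq_X_pow_mul_le hn j g
  have hk := wtq_X_pow_mul_le hn k g
  rw [← suppq_add hn, ← suppq_add hn, ← hsum] at hcard
  unfold pairOverlap
  unfold wtq suppq at *
  omega

lemma three_mul_rpow_one_third_le {x y z : ℝ} (hx : 0 ≤ x) (hy : 0 ≤ y) (hz : 0 ≤ z) :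
    3 * (x * y * z) ^ (1 / 3 : ℝ) ≤ x + y + z := by
  have := Real.geom_mean_le_arith_mean3_weighted (w₁ := 1 / 3) (w₂ := 1 / 3) (w₃ := 1 / 3)
    (by norm_num) (by norm_num) (by norm_num) hx hy hz (by norm_num)
  rw [Real.mul_rpow (by positivity) hz, Real.mul_rpow hx hy]
  linarith

lemma exists_trinomial_wtq_mul_le (hn : 1 ≤ n) {r : ℕ} (hr : 3 ≤ r) (g : Rq n) :
    ∃ i j k, i < j ∧ j < k ∧ k < r ∧
      (wtq n (mkq n (trinomial i j k 1 1 1) * g) : ℝ) ≤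
        3 * wtq n g - 6 * (rho6 n r g : ℝ) ^ (1 / 3 : ℝ) := by
  obtain ⟨i, j, k, hij, hjk, hkr, hrho⟩ := exists_rho6_eq hr g
  refine ⟨i, j, k, hij, hjk, hkr, ?_⟩
  have hwt : (wtq n (mkq n (trinomial i j k 1 1 1) * g) : ℝ) +
      2 * ((pairOverlap n g i j k : ℝ) + pairOverlap n g i k j + pairOverlap n g j k i) ≤
        3 * wtq n g := by
    exact_mod_cast wtq_trinomial_mul_add_le hn g i j k
  have hamgm := three_mul_rpow_one_third_le (pairOverlap n g i j k).cast_nonneg'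
    (pairOverlap n g i k j).cast_nonneg' (pairOverlap n g j k i).cast_nonneg'
  rw [hrho, Nat.cast_mul, Nat.cast_mul, ← mul_assoc]
  linarith

end SixCycles

section Codewords

lemma reverse_X_pow_sub_one {R : Type*} [CommRing R] [Nontrivial R] (n : ℕ) :
    (X ^ n - 1 : R[X]).reverse = 1 - X ^ n := by
  rw [sub_eq_add_neg, ← C_1, ← C_neg, reverse_add_C, natDegree_X_pow, C_neg, C_1,
    ← mul_one (X ^ n), reverse_X_pow_mul, ← C_1, reverse_C, C_1]
  ring

lemma reverse_pow {R : Type*} [Semiring R] [NoZeroDivisors R] (p : R[X]) (k : ℕ) :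
    (p ^ k).reverse = p.reverse ^ k := by
  induction k with
  | zero => rw [pow_zero, pow_zero, ← C_1, reverse_C]
  | succ k ih => rw [pow_succ, reverse_mul_of_domain, ih, pow_succ]

variable {n : ℕ} {a h : (ZMod 2)[X]}

lemma natDegree_X_pow_sub_one (n : ℕ) : (X ^ n - 1 : (ZMod 2)[X]).natDegree = n := by
  simpa using natDegree_X_pow_sub_C (n := n) (r := (1 : ZMod 2))

lemma add_self_eq_zero_rq (z : Rq n) : z + z = 0 := by
  have h2 : (2 : Rq n) = 0 := by
    rw [← map_ofNat (algebraMap (ZMod 2) (Rq n)) 2, show (OfNat.ofNat 2 : ZMod 2) = 0 from rfl,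
      map_zero]
  rw [← two_mul, h2, zero_mul]

lemma mkq_ne_zero_of_natDegree_lt {p : (ZMod 2)[X]} (hp : p ≠ 0) (hpn : p.natDegree < n) :
    mkq n p ≠ 0 := by
  rw [Ne, mkq_eq_zero_iff]
  intro hdvd
  have := natDegree_le_of_dvd hdvd hp
  rw [natDegree_X_pow_sub_one] at this
  omega

lemma mkq_mul_ne_zero (hn : 1 ≤ n) (hah : a * h = X ^ n - 1) {q e : (ZMod 2)[X]} (hq : q ≠ 0)
    (hqh : q.natDegree ≤ h.natDegree) (he : e ≠ 0) (hea : e.natDegree < a.natDegree) :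
    mkq n (q * e) ≠ 0 := by
  have hah0 : a * h ≠ 0 := hah ▸ (monic_X_pow_sub_one hn).ne_zero
  refine mkq_ne_zero_of_natDegree_lt (mul_ne_zero hq he) ?_
  calc (q * e).natDegree ≤ q.natDegree + e.natDegree := natDegree_mul_le
    _ < a.natDegree + h.natDegree := by omega
    _ = n := by
      rw [← natDegree_mul (left_ne_zero_of_mul hah0) (right_ne_zero_of_mul hah0), hah,
        natDegree_X_pow_sub_one]

lemma dXv_le_wtq_mul_pow_add_wtq (hn : 1 ≤ n) (hah : a * h = X ^ n - 1) {t : ℕ} (ht : t ≠ 0)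
    {e : (ZMod 2)[X]} (he : e ≠ 0) (hea : e.natDegree < a.natDegree) :
    dXv n a t ≤ wtq n (mkq n e * mkq n a ^ (t - 1)) + wtq n (mkq n e) := by
  refine Nat.sInf_le ⟨(mkq n e * mkq n a ^ (t - 1), mkq n e), ?_, ?_, rfl⟩
  · rw [show mkq n a * (mkq n e * mkq n a ^ (t - 1)) = mkq n a ^ t * mkq n e by
      rw [← mul_pow_sub_one ht]; ring]
    exact add_self_eq_zero_rq _
  · rintro ⟨s, hs⟩
    have hh : h ≠ 0 := right_ne_zero_of_mul (hah ▸ (monic_X_pow_sub_one hn).ne_zero)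
    refine mkq_mul_ne_zero hn hah (reverse_eq_zero.not.2 hh) (reverse_natDegree_le h) he hea ?_
    rw [map_mul, (Prod.mk.inj hs).2, ← mul_assoc, ← map_mul, ← reverse_mul_of_domain,
      mul_comm h, hah, reverse_X_pow_sub_one, (mkq_eq_zero_iff _).2 (dvd_sub_comm.1 dvd_rfl),
      zero_mul]

lemma dXv_le_wtq_mul_cofactor (hn : 1 ≤ n) (hah : a * h = X ^ n - 1) {t : ℕ} (ht : t ≠ 0)
    {e : (ZMod 2)[X]} (he : e ≠ 0) (hea : e.natDegree < a.natDegree) :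
    dXv n a t ≤ wtq n (mkq n e * mkq n h) := by
  calc dXv n a t ≤ wtq n (mkq n e * mkq n h) + wtq n 0 :=
        Nat.sInf_le ⟨(mkq n e * mkq n h, 0), ?_, ?_, rfl⟩
    _ = wtq n (mkq n e * mkq n h) := by rw [wtq_zero hn, add_zero]
  · rw [mul_zero, add_zero, ← map_mul, ← map_mul, mkq_eq_zero_iff]
    exact ⟨e, by rw [← hah]; ring⟩
  · rintro ⟨s, hs⟩
    obtain ⟨hs₁, hs₂⟩ := Prod.mk.inj hs
    have hh : h ≠ 0 := right_ne_zero_of_mul (hah ▸ (monic_X_pow_sub_one hn).ne_zero)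
    refine mkq_mul_ne_zero hn hah hh le_rfl he hea ?_
    rw [map_mul, mul_comm, hs₁, reverse_pow, map_pow, ← pow_sub_one_mul ht,
      mul_assoc, ← hs₂, mul_zero]

end Codewords

theorem stmt14_general (n : ℕ) (hn : 1 ≤ n) (a h : Polynomial (ZMod 2))
    (hah : a * h = X ^ n - 1) (r : ℕ) (hr : r = a.natDegree) (hr3 : 3 ≤ r)
    (ℓ t : ℕ) (ht : t = 2 ^ ℓ)
    (f : Rq n) (hf : f = (mkq n a) ^ (t - 1)) :
    (min (dXv n a t) (dZv n a t) : ℝ) ≤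
      min (3 * wtq n f + 3 - 6 * (rho6 n r f : ℝ) ^ ((1 : ℝ) / 3))
        (3 * wtq n (mkq n h) - 6 * (rho6 n r (mkq n h) : ℝ) ^ ((1 : ℝ) / 3)) := by
  have ht₀ : t ≠ 0 := ht ▸ pow_ne_zero ℓ two_ne_zero
  have htri : ∀ {i j k : ℕ}, i < j → j < k → k < r → trinomial i j k (1 : ZMod 2) 1 1 ≠ 0 ∧
      (trinomial i j k (1 : ZMod 2) 1 1).natDegree < a.natDegree := fun hij hjk hkr =>
    ⟨(trinomial_monic hij hjk).ne_zero, by rwa [trinomial_natDegree hij hjk one_ne_zero, ← hr]⟩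
  obtain ⟨i, j, k, hij, hjk, hkr, hf_bound⟩ := exists_trinomial_wtq_mul_le hn hr3 f
  obtain ⟨i', j', k', hij', hjk', hkr', hh_bound⟩ := exists_trinomial_wtq_mul_le hn hr3 (mkq n h)
  obtain ⟨he₀, hea⟩ := htri hij hjk hkr
  obtain ⟨he₀', hea'⟩ := htri hij' hjk' hkr'
  have hf_codeword : (dXv n a t : ℝ) ≤ wtq n (mkq n (trinomial i j k 1 1 1) * f) + 3 := by
    have := dXv_le_wtq_mul_pow_add_wtq hn hah ht₀ he₀ hea
    rw [← hf] at this
    exact_mod_cast this.trans (Nat.add_le_add_left (wtq_mkq_trinomial_le hn i j k) _)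
  have hh_codeword : (dXv n a t : ℝ) ≤ wtq n (mkq n (trinomial i' j' k' 1 1 1) * mkq n h) := by
    exact_mod_cast dXv_le_wtq_mul_cofactor hn hah ht₀ he₀' hea'
  have hmin : (min (dXv n a t) (dZv n a t) : ℝ) ≤ dXv n a t := by exact_mod_cast min_le_left _ _
  exact le_min (by linarith) (by linarith)

/-- weight-3 distance bound from induced 6-cycle densities:
`d ≤ min{3 wt(f) + 3 - 6 ρ_6(f)^{1/3}, 3 wt(h) - 6 ρ_6(h)^{1/3}}`. -/
theorem stmt14 (n : ℕ) (hn : 1 ≤ n) (a h : Polynomial (ZMod 2))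
    (hah : a * h = X ^ n - 1) (r : ℕ) (hr : r = a.natDegree) (hr3 : 3 ≤ r)
    (ℓ t : ℕ) (hℓ : 1 ≤ ℓ) (ht : t = 2 ^ ℓ)
    (f : Rq n) (hf : f = (mkq n a) ^ (t - 1)) :
    (min (dXv n a t) (dZv n a t) : ℝ) ≤
      min (3 * wtq n f + 3 - 6 * (rho6 n r f : ℝ) ^ ((1 : ℝ) / 3))
        (3 * wtq n (mkq n h) - 6 * (rho6 n r (mkq n h) : ℝ) ^ ((1 : ℝ) / 3)) :=
  stmt14_general n hn a h hah r hr hr3 ℓ t ht f hf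

end
end
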